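/- arXiv:2307.14290 — 2 statements merged into one kernel-verified Lean document; each statement's English description precedes it below -/
import Mathlib

section
/- Let X be a nonnegative random variable with support (0, r), r < ∞, whose moment generating function M_X(s) = E[e^{sX}] is finite for all s ∈ (−s₀, s₀) with s₀ > 0. Then for all s₁ ∈ (−s₀, 0), s₂ ∈ (0, s₀), and all (α, β) ∈ D_X with α > 0 and β > 0, one has G_X(α, β) ≤ g(r; α, β, s₁, s₂) · M_X(s₁)^α · M_X(s₂)^β, where g(r; α, β, s₁, s₂) = (1 − e^{−(αs₁ + βs₂) r}) / (αs₁ + βs₂) if αs₁ + βs₂ ≠ 0, and g = r if αs₁ + βs₂ = 0. -/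
open MeasureTheory ProbabilityTheory Set

/-- The (essential) support interval of a CDF `F`: the set where `0 < F x < 1`,
which coincides (up to endpoints) with the interval `(l, r)` where
`l = inf {x : F x > 0}` and `r = sup {x : 1 - F x > 0}`. -/
def cigfSupport (F : ℝ → ℝ) : Set ℝ := {x | 0 < F x ∧ F x < 1}

/-- The cumulative information generating function
`G_X(α, β) = ∫_l^r F(x)^α (1 - F(x))^β dx`. -/
noncomputable def cigf (F : ℝ → ℝ) (α β : ℝ) : ℝ :=
  ∫ x in cigfSupport F, F x ^ α * (1 - F x) ^ β

/-- `(α, β) ∈ D_X`, i.e. `G_X(α, β) < ∞`. -/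
def memD (F : ℝ → ℝ) (α β : ℝ) : Prop :=
  IntegrableOn (fun x => F x ^ α * (1 - F x) ^ β) (cigfSupport F)

/-- The CDF of a random variable `X` under the probability measure `P`. -/
noncomputable def rvCDF {Ω : Type*} [MeasurableSpace Ω] (P : Measure Ω) (X : Ω → ℝ) (x : ℝ) : ℝ :=
  (P {ω | X ω ≤ x}).toReal

/-- The CDF of a probability measure on `ℝ`. -/
noncomputable def cdfOf (μ : Measure ℝ) (x : ℝ) : ℝ := (μ (Iic x)).toReal


/-!
Chernoff's bounds `F x ≤ e^{-s₁x} M_X(s₁)` and `1 - F x ≤ e^{-s₂x} M_X(s₂)` give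
`F^α (1 - F)^β ≤ e^{-(αs₁ + βs₂)x} M_X(s₁)^α M_X(s₂)^β` pointwise. The integrand of the CIGF is
nonnegative and lives on `(0, r)`, so the CIGF is at most the integral of this exponential over
`(0, r)`, which is `g(r; α, β, s₁, s₂)` times the constant.
-/

section RvCDF

variable {Ω : Type*} [MeasurableSpace Ω] (P : Measure Ω) (X : Ω → ℝ)

lemma monotone_rvCDF [IsFiniteMeasure P] : Monotone (rvCDF P X) := fun _ _ hab =>
  measureReal_mono fun _ (h : X _ ≤ _) => h.trans hab

lemma rvCDF_nonneg (x : ℝ) : 0 ≤ rvCDF P X x := ENNReal.toReal_nonneg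

lemma rvCDF_le_one [IsZeroOrProbabilityMeasure P] (x : ℝ) : rvCDF P X x ≤ 1 :=
  measureReal_le_one

lemma rvCDF_le_exp_mul_mgf [IsFiniteMeasure P] {s : ℝ} (hs : s ≤ 0)
    (hint : Integrable (fun ω => Real.exp (s * X ω)) P) (x : ℝ) :
    rvCDF P X x ≤ Real.exp (-s * x) * mgf X P s :=
  measure_le_le_exp_mul_mgf x hs hint

variable [IsProbabilityMeasure P]

lemma one_sub_rvCDF (hX : Measurable X) (x : ℝ) :
    1 - rvCDF P X x = P.real {ω | x < X ω} := by
  rw [rvCDF, ← measureReal_def, ← probReal_compl_eq_one_sub (measurableSet_le hX measurable_const)]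
  simp only [compl_ofPred, not_le]

lemma one_sub_rvCDF_le_exp_mul_mgf (hX : Measurable X) {s : ℝ} (hs : 0 ≤ s)
    (hint : Integrable (fun ω => Real.exp (s * X ω)) P) (x : ℝ) :
    1 - rvCDF P X x ≤ Real.exp (-s * x) * mgf X P s :=
  calc 1 - rvCDF P X x = P.real {ω | x < X ω} := one_sub_rvCDF P X hX x
    _ ≤ P.real {ω | x ≤ X ω} := measureReal_mono fun _ (h : x < X _) => h.le
    _ ≤ Real.exp (-s * x) * mgf X P s := measure_ge_le_exp_mul_mgf x hs hint

end RvCDF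

lemma cigfSupport_subset_Ioo {F : ℝ → ℝ} (hF : Monotone F) {a b : ℝ} (ha : F a ≤ 0)
    (hb : 1 ≤ F b) : cigfSupport F ⊆ Ioo a b := fun _ ⟨h0, h1⟩ =>
  ⟨hF.reflect_lt (ha.trans_lt h0), hF.reflect_lt (h1.trans_le hb)⟩

lemma cigf_le_setIntegral {F g : ℝ → ℝ} {α β : ℝ} {s : Set ℝ} (hF0 : ∀ x, 0 ≤ F x)
    (hF1 : ∀ x, F x ≤ 1) (hs : cigfSupport F ⊆ s) (hg : IntegrableOn g s)
    (hle : ∀ x, F x ^ α * (1 - F x) ^ β ≤ g x) :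
    cigf F α β ≤ ∫ x in s, g x := by
  have hnonneg : ∀ x, 0 ≤ F x ^ α * (1 - F x) ^ β := fun x =>
    mul_nonneg (Real.rpow_nonneg (hF0 x) α) (Real.rpow_nonneg (sub_nonneg.2 (hF1 x)) β)
  calc cigf F α β ≤ ∫ x in cigfSupport F, g x :=
        integral_mono_of_nonneg (.of_forall hnonneg) (hg.mono_set hs) (.of_forall hle)
    _ ≤ ∫ x in s, g x :=
        setIntegral_mono_set hg (.of_forall fun x => (hnonneg x).trans (hle x)) hs.eventuallyLE

lemma rpow_mul_rpow_le_exp_mul {u v α β s₁ s₂ M₁ M₂ x : ℝ} (hu : 0 ≤ u) (hv : 0 ≤ v)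
    (hα : 0 ≤ α) (hβ : 0 ≤ β) (hM₁ : 0 ≤ M₁) (hM₂ : 0 ≤ M₂)
    (hu' : u ≤ Real.exp (-s₁ * x) * M₁) (hv' : v ≤ Real.exp (-s₂ * x) * M₂) :
    u ^ α * v ^ β ≤ Real.exp (-(α * s₁ + β * s₂) * x) * (M₁ ^ α * M₂ ^ β) :=
  calc u ^ α * v ^ β ≤ (Real.exp (-s₁ * x) * M₁) ^ α * (Real.exp (-s₂ * x) * M₂) ^ β := by
        gcongr
    _ = Real.exp (-(α * s₁ + β * s₂) * x) * (M₁ ^ α * M₂ ^ β) := by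
        rw [Real.mul_rpow (Real.exp_nonneg _) hM₁, Real.mul_rpow (Real.exp_nonneg _) hM₂,
          ← Real.exp_mul, ← Real.exp_mul, mul_mul_mul_comm, ← Real.exp_add]
        ring_nf

lemma integral_exp_neg_mul_Ioo {r : ℝ} (hr : 0 ≤ r) (c : ℝ) :
    ∫ x in Ioo 0 r, Real.exp (-c * x) = if c = 0 then r else (1 - Real.exp (-c * r)) / c := by
  rw [← integral_Ioc_eq_integral_Ioo, ← intervalIntegral.integral_of_le hr]
  split_ifs with hc
  · simp [hc]
  · rw [intervalIntegral.integral_comp_mul_left Real.exp (neg_ne_zero.mpr hc), integral_exp]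
    simp only [smul_eq_mul, mul_zero, Real.exp_zero]
    field_simp
    ring

theorem stmt8_general {Ω : Type*} [MeasurableSpace Ω] (P : Measure Ω) [IsProbabilityMeasure P]
    (X : Ω → ℝ) (hX : Measurable X)
    (r : ℝ) (hr : 0 < r)
    (hsupp₀ : rvCDF P X 0 = 0)
    (hsupp₃ : ∀ x : ℝ, r ≤ x → rvCDF P X x = 1)
    (s₀ : ℝ) (hs₀ : 0 < s₀)
    (hmgf : ∀ s ∈ Ioo (-s₀) s₀, Integrable (fun ω => Real.exp (s * X ω)) P)
    (s₁ : ℝ) (hs₁ : s₁ ∈ Ioo (-s₀) 0) (s₂ : ℝ) (hs₂ : s₂ ∈ Ioo (0:ℝ) s₀)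
    (α β : ℝ) (hα : 0 < α) (hβ : 0 < β) :
    cigf (rvCDF P X) α β ≤
      (if α * s₁ + β * s₂ = 0 then r
        else (1 - Real.exp (-(α * s₁ + β * s₂) * r)) / (α * s₁ + β * s₂)) *
        mgf X P s₁ ^ α * mgf X P s₂ ^ β := by
  have hint₁ := hmgf s₁ ⟨hs₁.1, hs₁.2.trans hs₀⟩
  have hint₂ := hmgf s₂ ⟨(neg_neg_of_pos hs₀).trans hs₂.1, hs₂.2⟩
  have hsupp : cigfSupport (rvCDF P X) ⊆ Ioo 0 r :=
    cigfSupport_subset_Ioo (monotone_rvCDF P X) hsupp₀.le (hsupp₃ r le_rfl).ge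
  have hbound : ∀ x, rvCDF P X x ^ α * (1 - rvCDF P X x) ^ β ≤
      Real.exp (-(α * s₁ + β * s₂) * x) * (mgf X P s₁ ^ α * mgf X P s₂ ^ β) := fun x =>
    rpow_mul_rpow_le_exp_mul (rvCDF_nonneg P X x) (sub_nonneg.2 (rvCDF_le_one P X x)) hα.le hβ.le
      mgf_nonneg mgf_nonneg (rvCDF_le_exp_mul_mgf P X hs₁.2.le hint₁ x)
      (one_sub_rvCDF_le_exp_mul_mgf P X hX hs₂.1.le hint₂ x)
  have hint : IntegrableOn
      (fun x => Real.exp (-(α * s₁ + β * s₂) * x) * (mgf X P s₁ ^ α * mgf X P s₂ ^ β))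
      (Ioo 0 r) :=
    (Continuous.integrableOn_Icc (by fun_prop)).mono_set Ioo_subset_Icc_self
  calc cigf (rvCDF P X) α β ≤ _ :=
        cigf_le_setIntegral (rvCDF_nonneg P X) (rvCDF_le_one P X) hsupp hint hbound
    _ = _ := by rw [integral_mul_const, integral_exp_neg_mul_Ioo hr.le, mul_assoc]

/-- Chernoff-type bound for the CIGF of a nonnegative random variable with
support `(0, r)`, `r < ∞`, in terms of the moment generating function. -/
theorem stmt8 {Ω : Type*} [MeasurableSpace Ω] (P : Measure Ω) [IsProbabilityMeasure P]
    (X : Ω → ℝ) (hX : Measurable X) (hXnn : ∀ ω, 0 ≤ X ω)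
    (r : ℝ) (hr : 0 < r)
    (hsupp₀ : rvCDF P X 0 = 0)
    (hsupp₁ : ∀ x : ℝ, 0 < x → 0 < rvCDF P X x)
    (hsupp₂ : ∀ x : ℝ, x < r → rvCDF P X x < 1)
    (hsupp₃ : ∀ x : ℝ, r ≤ x → rvCDF P X x = 1)
    (s₀ : ℝ) (hs₀ : 0 < s₀)
    (hmgf : ∀ s ∈ Ioo (-s₀) s₀, Integrable (fun ω => Real.exp (s * X ω)) P)
    (s₁ : ℝ) (hs₁ : s₁ ∈ Ioo (-s₀) 0) (s₂ : ℝ) (hs₂ : s₂ ∈ Ioo (0:ℝ) s₀)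
    (α β : ℝ) (hα : 0 < α) (hβ : 0 < β) (hD : memD (rvCDF P X) α β) :
    cigf (rvCDF P X) α β ≤
      (if α * s₁ + β * s₂ = 0 then r
        else (1 - Real.exp (-(α * s₁ + β * s₂) * r)) / (α * s₁ + β * s₂)) *
        mgf X P s₁ ^ α * mgf X P s₂ ^ β :=
  stmt8_general P X hX r hr hsupp₀ hsupp₃ s₀ hs₀ hmgf s₁ hs₁ s₂ hs₂ α β hα hβ
end

section
/- Let X₁, …, X_n be i.i.d. copies of a nonnegative random variable X with support (0, r), r ∈ (0, ∞], and let X_{(n:n)} = max{X₁, …, X_n}, so that its CDF is F(x)^n. Let α ≥ 0 and β > 0 be such that G_{X_{(n:n)}}(α, β) < ∞ and H_X(n(i+α)) < ∞ for all i ∈ ℕ₀. Then G_{X_{(n:n)}}(α, β) = Σ_{i=0}^∞ (−1)^i C(β, i) · H_X(n(i + α)), where C(β, i) = β(β−1)···(β−i+1)/i! is the generalized binomial coefficient. -/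
open MeasureTheory ProbabilityTheory Set

/-- The generalized binomial coefficient `C(a, n) = a(a-1)⋯(a-n+1)/n!`. -/
noncomputable def genBinom (a : ℝ) (n : ℕ) : ℝ :=
  (∏ i ∈ Finset.range n, (a - i)) / (n.factorial : ℝ)

/-! For `0 < t < 1` the binomial series gives `t ^ α * (1 - t) ^ β = ∑ (-1)ⁱ C(β, i) t ^ (i + α)`;
apply it with `t = F(x)ⁿ` and integrate termwise over the support. The exchange of sum and
integral is justified because `∑ |C(β, i)| < ∞` for `β ≥ 0` (once `i + 1 ≥ β`, the terms
`|C(β, i + 1)| = |C(β - 1, i)| - |C(β - 1, i + 1)|` telescope) while the integrals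
`∫ F ^ (n (i + α))` decrease in `i`, being integrals of powers of a number in `(0, 1)`. -/

theorem genBinom_eq_choose (a : ℝ) (n : ℕ) : genBinom a n = Ring.choose a n := by
  rw [Ring.choose_eq_smul, ← Polynomial.aeval_eq_smeval, smul_eq_mul, genBinom, div_eq_inv_mul,
    Polynomial.aeval_def, Polynomial.eval₂_eq_eval_map, descPochhammer_map,
    descPochhammer_eval_eq_prod_range]

theorem genBinom_succ (a : ℝ) (m : ℕ) :
    genBinom a (m + 1) = genBinom a m * ((a - m) / (m + 1)) := by
  simp only [genBinom, Finset.prod_range_succ, Nat.factorial_succ, Nat.cast_mul, Nat.cast_succ]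
  field_simp

theorem genBinom_add_one_succ (a : ℝ) (m : ℕ) :
    genBinom (a + 1) (m + 1) = genBinom a m * ((a + 1) / (m + 1)) := by
  rw [genBinom_eq_choose, genBinom_eq_choose, Ring.choose_succ_succ, ← genBinom_eq_choose,
    ← genBinom_eq_choose, genBinom_succ]
  field_simp
  ring

theorem abs_genBinom_succ_eq_sub {β : ℝ} (hβ : 0 ≤ β) {m : ℕ} (hm : β ≤ m + 1) :
    |genBinom β (m + 1)| = |genBinom (β - 1) m| - |genBinom (β - 1) (m + 1)| := by
  have hm' : (0 : ℝ) < m + 1 := by positivity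
  have h := genBinom_add_one_succ (β - 1) m
  rw [sub_add_cancel] at h
  rw [h, genBinom_succ, abs_mul, abs_mul, abs_of_nonneg (by positivity : 0 ≤ β / (m + 1)),
    abs_of_nonpos (div_nonpos_of_nonpos_of_nonneg (by linarith) hm'.le)]
  field_simp
  ring

theorem summable_abs_genBinom {β : ℝ} (hβ : 0 ≤ β) : Summable fun i => |genBinom β i| := by
  set N := ⌈β⌉₊
  have htelescope : ∀ k, |genBinom β (N + k + 1)| =
      |genBinom (β - 1) (N + k)| - |genBinom (β - 1) (N + k + 1)| := fun k =>
    abs_genBinom_succ_eq_sub hβ <| by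
      push_cast; linarith [Nat.le_ceil β, (k.cast_nonneg : (0 : ℝ) ≤ k)]
  have htail : Summable fun k => |genBinom β (k + (N + 1))| := by
    refine summable_of_sum_range_le (c := |genBinom (β - 1) N|) (fun _ => abs_nonneg _) fun K => ?_
    simp_rw [← add_assoc, add_comm _ N, htelescope]
    calc _ = |genBinom (β - 1) (N + 0)| - |genBinom (β - 1) (N + K)| :=
          Finset.sum_range_sub' (fun k => |genBinom (β - 1) (N + k)|) K
      _ ≤ |genBinom (β - 1) N| := sub_le_self _ (abs_nonneg _)
  exact (summable_nat_add_iff (N + 1)).1 htail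

theorem hasSum_genBinom_mul_pow (β : ℝ) {t : ℝ} (ht : |t| < 1) :
    HasSum (fun i : ℕ => (-1) ^ i * genBinom β i * t ^ i) ((1 - t) ^ β) := by
  have h := Real.one_add_rpow_hasFPowerSeriesOnBall_zero (a := β) |>.hasSum (y := -t)
    (by simpa [enorm_eq_nnnorm, ← NNReal.coe_lt_coe] using ht)
  simp only [binomialSeries_apply, List.ofFn_const, List.prod_replicate, smul_eq_mul, zero_sub,
    ← sub_eq_add_neg] at h
  refine h.congr_fun fun i => ?_
  rw [genBinom_eq_choose, neg_pow]
  ring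

theorem hasSum_rpow_mul_one_sub_rpow (α β : ℝ) {p u : ℝ} (hp : 0 < p) (hu0 : 0 < u)
    (hu1 : u < 1) :
    HasSum (fun i : ℕ => (-1) ^ i * genBinom β i * u ^ (p * (i + α)))
      ((u ^ p) ^ α * (1 - u ^ p) ^ β) := by
  have ht0 : 0 < u ^ p := Real.rpow_pos_of_pos hu0 p
  have ht1 : u ^ p < 1 := Real.rpow_lt_one hu0.le hu1 hp
  rw [mul_comm]
  have ht : |u ^ p| < 1 := abs_lt.2 ⟨by linarith, ht1⟩
  refine ((hasSum_genBinom_mul_pow β ht).mul_right ((u ^ p) ^ α)).congr_fun fun i => ?_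
  rw [mul_assoc _ ((u ^ p) ^ i), ← Real.rpow_natCast (u ^ p) i, ← Real.rpow_add ht0,
    ← Real.rpow_mul hu0.le]

theorem integral_tsum_mul_of_summable_abs {X : Type*} [MeasurableSpace X] {ν : Measure X}
    {a : ℕ → ℝ} {g : ℕ → X → ℝ} (ha : Summable fun i => |a i|) (hg : ∀ i, Integrable (g i) ν)
    {C : ℝ} (hC : ∀ i, ∫ x, |g i x| ∂ν ≤ C) :
    ∫ x, ∑' i, a i * g i x ∂ν = ∑' i, a i * ∫ x, g i x ∂ν := by
  have hnorm : ∀ i, ∫ x, ‖a i * g i x‖ ∂ν = |a i| * ∫ x, |g i x| ∂ν := fun i => by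
    simp only [norm_mul, Real.norm_eq_abs, integral_const_mul]
  have hsum : Summable fun i => ∫ x, ‖a i * g i x‖ ∂ν := by
    refine (ha.mul_right C).of_nonneg_of_le (fun i => integral_nonneg fun _ => norm_nonneg _)
      fun i => ?_
    rw [hnorm]
    exact mul_le_mul_of_nonneg_left (hC i) (abs_nonneg _)
  rw [← integral_tsum_of_summable_integral_norm (fun i => (hg i).const_mul (a i)) hsum]
  simp only [integral_const_mul]

theorem measurableSet_cigfSupport {F : ℝ → ℝ} (hF : Measurable F) :
    MeasurableSet (cigfSupport F) :=
  hF measurableSet_Ioo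

theorem cigfSupport_rpow {F : ℝ → ℝ} (hF : ∀ x, 0 ≤ F x) {p : ℝ} (hp : 0 < p) :
    cigfSupport (fun x => F x ^ p) = cigfSupport F := by
  ext x
  simp only [cigfSupport, mem_ofPred_eq]
  constructor
  · rintro ⟨h0, h1⟩
    have hx0 : 0 < F x := (hF x).lt_of_ne fun h => by simp [← h, Real.zero_rpow hp.ne'] at h0
    refine ⟨hx0, ?_⟩
    rcases (Real.rpow_lt_one_iff_of_pos hx0).1 h1 with h | h
    · linarith [h.2]
    · exact h.1
  · rintro ⟨h0, h1⟩
    exact ⟨Real.rpow_pos_of_pos h0 p, Real.rpow_lt_one (hF x) h1 hp⟩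

theorem cdfOf_eq_cdf (μ : Measure ℝ) [IsProbabilityMeasure μ] : cdfOf μ = cdf μ :=
  funext fun x => (cdf_eq_real μ x).symm

theorem stmt14_general (μ : Measure ℝ) [IsProbabilityMeasure μ]
    (n : ℕ) (hn : 0 < n)
    (α β : ℝ) (hβ : 0 < β)
    (hH : ∀ i : ℕ,
      IntegrableOn (fun x => cdfOf μ x ^ ((n : ℝ) * ((i : ℝ) + α))) (cigfSupport (cdfOf μ))) :
    cigf (fun x => cdfOf μ x ^ (n : ℝ)) α β =
      ∑' i : ℕ, (-1) ^ i * genBinom β i *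
        ∫ x in cigfSupport (cdfOf μ), cdfOf μ x ^ ((n : ℝ) * ((i : ℝ) + α)) := by
  have hn0 : (0 : ℝ) < n := Nat.cast_pos.2 hn
  have hF0 : ∀ x, 0 ≤ cdfOf μ x := by simp [cdfOf_eq_cdf, cdf_nonneg]
  have hFm : Measurable (cdfOf μ) := by rw [cdfOf_eq_cdf]; exact (cdf μ).mono.measurable
  have hS := measurableSet_cigfSupport hFm
  have hdecay : ∀ i : ℕ, ∫ x in cigfSupport (cdfOf μ), |cdfOf μ x ^ ((n : ℝ) * ((i : ℝ) + α))| ≤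
      ∫ x in cigfSupport (cdfOf μ), cdfOf μ x ^ ((n : ℝ) * (((0 : ℕ) : ℝ) + α)) := fun i =>
    setIntegral_mono_on (hH i).abs (hH 0) hS fun x hx => by
      rw [abs_of_nonneg (Real.rpow_nonneg (hF0 x) _)]
      exact Real.rpow_le_rpow_of_exponent_ge hx.1 hx.2.le (by push_cast; nlinarith)
  calc cigf (fun x => cdfOf μ x ^ (n : ℝ)) α β
      = ∫ x in cigfSupport (cdfOf μ),
          (cdfOf μ x ^ (n : ℝ)) ^ α * (1 - cdfOf μ x ^ (n : ℝ)) ^ β := by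
        rw [cigf, cigfSupport_rpow hF0 hn0]
    _ = ∫ x in cigfSupport (cdfOf μ), ∑' i : ℕ,
          (-1) ^ i * genBinom β i * cdfOf μ x ^ ((n : ℝ) * ((i : ℝ) + α)) :=
        setIntegral_congr_fun hS fun x hx =>
          ((hasSum_rpow_mul_one_sub_rpow α β hn0 hx.1 hx.2).tsum_eq).symm
    _ = _ := integral_tsum_mul_of_summable_abs
        (by simpa using summable_abs_genBinom hβ.le) hH hdecay

/-- For the maximum `X_(n:n)` of `n` i.i.d. copies of a nonnegative `X`,
whose CDF is `F(x)^n`, one has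
`G_(X_(n:n))(α, β) = ∑ᵢ (-1)ⁱ C(β, i) H_X(n(i + α))`,
where `H_X(γ) = ∫_l^r F(x)^γ dx`. -/
theorem stmt14 (μ : Measure ℝ) [IsProbabilityMeasure μ]
    (hnn : μ (Iio 0) = 0) (n : ℕ) (hn : 0 < n)
    (α β : ℝ) (hα : 0 ≤ α) (hβ : 0 < β)
    (hD : memD (fun x => cdfOf μ x ^ (n : ℝ)) α β)
    (hH : ∀ i : ℕ,
      IntegrableOn (fun x => cdfOf μ x ^ ((n : ℝ) * ((i : ℝ) + α))) (cigfSupport (cdfOf μ))) :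
    cigf (fun x => cdfOf μ x ^ (n : ℝ)) α β =
      ∑' i : ℕ, (-1) ^ i * genBinom β i *
        ∫ x in cigfSupport (cdfOf μ), cdfOf μ x ^ ((n : ℝ) * ((i : ℝ) + α)) :=
  stmt14_general μ n hn α β hβ hH
end
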